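/- arXiv:2504.19554 — 6 statements merged into one kernel-verified Lean document; each statement's English description precedes it below -/
import Mathlib

section
/- Suppose f : ℝ² × A → ℝ² is bounded by M (|f(x,a)| ≤ M for all x,a) and X : [0,T) → ℝ² is an absolutely continuous function with X(0) = x satisfying, for almost every t, Ẋ(t) = f(X(t),α(t)) − (1/ε)∇d(X(t)) where d(y) = y₁²y₂² and ε > 0. Then |X(t)| ≤ |x| + √2·M·t for all t ∈ [0,T). -/
/-!
Regularize the radius as `w = √(|X|² + δ²)`. Along the flow, `(|X|²)' = 2⟨X, f⟩ − (2/ε)⟨X, ∇d(X)⟩`,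
and `⟨y, ∇d(y)⟩ = 4 d(y) ≥ 0` because `d` is homogeneous of degree 4, so the penalty can only pull
`X` towards the origin. Cauchy–Schwarz then gives `w' ≤ M |X| / w ≤ M`, hence
`|X(t)| ≤ w(t) ≤ w(0) + M t ≤ |x| + δ + M t`; let `δ → 0` and use `M ≤ √2 M`.
-/

open Set Real

lemma mul_add_mul_le_sqrt_mul_sqrt (a b p q : ℝ) :
    a * p + b * q ≤ √(a ^ 2 + b ^ 2) * √(p ^ 2 + q ^ 2) := by
  rw [← sqrt_mul (by positivity)]
  exact (le_abs_self _).trans (abs_le_sqrt (by nlinarith [sq_nonneg (a * q - b * p)]))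

lemma sqrt_add_sq_le_sqrt_add {x δ : ℝ} (hx : 0 ≤ x) (hδ : 0 ≤ δ) : √(x + δ ^ 2) ≤ √x + δ := by
  rw [sqrt_le_left (by positivity)]
  nlinarith [sq_sqrt hx, sqrt_nonneg x]

section Comparison

variable {u u' : ℝ → ℝ} {a b M : ℝ}

lemma sqrt_add_sq_le_of_deriv_le_two_mul_sqrt {δ : ℝ} (hM : 0 ≤ M) (hδ : δ ≠ 0)
    (hu : ∀ s ∈ Icc a b, HasDerivAt u (u' s) s) (hu₀ : ∀ s ∈ Icc a b, 0 ≤ u s)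
    (hu' : ∀ s ∈ Icc a b, u' s ≤ 2 * M * √(u s)) :
    ∀ s ∈ Icc a b, √(u s + δ ^ 2) ≤ √(u a + δ ^ 2) + M * (s - a) := by
  have hpos : ∀ s ∈ Icc a b, 0 < u s + δ ^ 2 := fun s hs => by
    have := hu₀ s hs; positivity
  have hw : ∀ s ∈ Icc a b, HasDerivAt (fun s => √(u s + δ ^ 2))
      (u' s / (2 * √(u s + δ ^ 2))) s := fun s hs =>
    ((hu s hs).add_const _).sqrt (hpos s hs).ne'
  have hw' : ∀ s ∈ Icc a b, u' s / (2 * √(u s + δ ^ 2)) ≤ M := fun s hs => by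
    have hu_le : √(u s) ≤ √(u s + δ ^ 2) := sqrt_le_sqrt (le_add_of_nonneg_right (sq_nonneg δ))
    rw [div_le_iff₀ (by have := sqrt_pos.2 (hpos s hs); positivity)]
    nlinarith [hu' s hs]
  have hline : ∀ s, HasDerivAt (fun s => √(u a + δ ^ 2) + M * (s - a)) M s := fun s =>
    ((((hasDerivAt_id s).sub_const a).const_mul M).const_add _).congr_deriv (mul_one M)
  exact image_le_of_deriv_right_le_deriv_boundary
    (fun s hs => (hw s hs).continuousAt.continuousWithinAt)
    (fun s hs => (hw s (Ico_subset_Icc_self hs)).hasDerivWithinAt) (by simp)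
    (by fun_prop) (fun s _ => (hline s).hasDerivWithinAt)
    (fun s hs => hw' s (Ico_subset_Icc_self hs))

theorem sqrt_le_sqrt_add_mul_of_deriv_le_two_mul_sqrt (hM : 0 ≤ M) (hab : a ≤ b)
    (hu : ∀ s ∈ Icc a b, HasDerivAt u (u' s) s) (hu₀ : ∀ s ∈ Icc a b, 0 ≤ u s)
    (hu' : ∀ s ∈ Icc a b, u' s ≤ 2 * M * √(u s)) :
    √(u b) ≤ √(u a) + M * (b - a) := by
  have hb : b ∈ Icc a b := right_mem_Icc.2 hab
  refine le_of_forall_pos_le_add fun δ hδ => ?_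
  calc √(u b) ≤ √(u b + δ ^ 2) := sqrt_le_sqrt (le_add_of_nonneg_right (sq_nonneg δ))
    _ ≤ √(u a + δ ^ 2) + M * (b - a) :=
      sqrt_add_sq_le_of_deriv_le_two_mul_sqrt hM hδ.ne' hu hu₀ hu' b hb
    _ ≤ √(u a) + δ + M * (b - a) := by
      gcongr; exact sqrt_add_sq_le_sqrt_add (hu₀ a (left_mem_Icc.2 hab)) hδ.le
    _ = √(u a) + M * (b - a) + δ := by ring

end Comparison

/-- The radial derivative `2⟨y, f − (1/ε)∇d(y)⟩` of `|y|²` for `d(y) = y₁²y₂²`. -/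
lemma two_mul_inner_penalized_field_le {ε M a b p q : ℝ} (hε : 0 < ε)
    (hpq : √(p ^ 2 + q ^ 2) ≤ M) :
    2 * a * (p - 1 / ε * (2 * a * b ^ 2)) + 2 * b * (q - 1 / ε * (2 * a ^ 2 * b))
      ≤ 2 * M * √(a ^ 2 + b ^ 2) := by
  have hpenalty : 0 ≤ 1 / ε * (a ^ 2 * b ^ 2) := by positivity
  have hcs : a * p + b * q ≤ M * √(a ^ 2 + b ^ 2) :=
    (mul_add_mul_le_sqrt_mul_sqrt a b p q).trans <| by
      rw [mul_comm M]; exact mul_le_mul_of_nonneg_left hpq (sqrt_nonneg _)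
  nlinarith

/-- Bound on perturbed trajectories: if |f| ≤ M and Ẋ = f(X,α) − (1/ε)∇d(X) with
    d(y) = y₁²y₂², then |X(t)| ≤ |x| + √2 M t on [0,T). -/
theorem perturbed_traj_bound {A : Type*} (f : ℝ × ℝ → A → ℝ × ℝ) (M ε T x₁ x₂ : ℝ)
    (α : ℝ → A) (X₁ X₂ : ℝ → ℝ)
    (hM : ∀ p a, Real.sqrt ((f p a).1 ^ 2 + (f p a).2 ^ 2) ≤ M)
    (hε : 0 < ε)
    (hX₁ : ∀ t ∈ Set.Ico (0 : ℝ) T,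
      HasDerivAt X₁ ((f (X₁ t, X₂ t) (α t)).1 - (1 / ε) * (2 * X₁ t * (X₂ t) ^ 2)) t)
    (hX₂ : ∀ t ∈ Set.Ico (0 : ℝ) T,
      HasDerivAt X₂ ((f (X₁ t, X₂ t) (α t)).2 - (1 / ε) * (2 * (X₁ t) ^ 2 * X₂ t)) t)
    (hinit₁ : X₁ 0 = x₁) (hinit₂ : X₂ 0 = x₂) :
    ∀ t ∈ Set.Ico (0 : ℝ) T,
      Real.sqrt ((X₁ t) ^ 2 + (X₂ t) ^ 2)
        ≤ Real.sqrt (x₁ ^ 2 + x₂ ^ 2) + Real.sqrt 2 * M * t := by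
  intro t ⟨ht₀, htT⟩
  have hM₀ : 0 ≤ M := (sqrt_nonneg _).trans (hM (x₁, x₂) (α 0))
  have hsub : Icc 0 t ⊆ Ico 0 T := Icc_subset_Ico_right htT
  have hradius := sqrt_le_sqrt_add_mul_of_deriv_le_two_mul_sqrt
    (u := fun s => X₁ s ^ 2 + X₂ s ^ 2) hM₀ ht₀
    (fun s hs => (((hX₁ s (hsub hs)).pow 2).add ((hX₂ s (hsub hs)).pow 2)).congr_deriv (by ring))
    (fun s _ => by positivity) (fun s _ => two_mul_inner_penalized_field_le hε (hM _ _))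
  simp only [hinit₁, hinit₂, sub_zero] at hradius
  calc √(X₁ t ^ 2 + X₂ t ^ 2) ≤ √(x₁ ^ 2 + x₂ ^ 2) + M * t := hradius
    _ ≤ √(x₁ ^ 2 + x₂ ^ 2) + √2 * M * t := by
      gcongr
      exact le_mul_of_one_le_left hM₀ (one_le_sqrt.2 one_le_two)
end

section
/- Let d(x) = x₁²x₂², ε > 0, and let X : [0,∞) → ℝ² be absolutely continuous with Ẋ(t) = f(X(t),α(t)) − (1/ε)∇d(X(t)) a.e., where |f(y,a)| ≤ M for all y, a. Then for all 0 ≤ t₁ ≤ t₂, d(X(t₂)) − d(X(t₁)) ≤ (t₂ − t₁)·(M²/2)·ε. -/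
/-
Along the trajectory, `d ∘ X` has derivative `⟨∇d(X), f⟩ - |∇d(X)|² / ε`. In each coordinate,
AM-GM gives `a p - a² / ε ≤ ε p² / 4`, so this rate is at most `ε |f|² / 4 ≤ M² ε / 2`, and the
mean value inequality turns the rate bound into the bound on the increment.
-/

lemma mul_sub_one_div_mul_le {ε : ℝ} (hε : 0 < ε) (a p : ℝ) :
    a * (p - 1 / ε * a) ≤ ε * p ^ 2 / 4 := by
  have hgap : ε * p ^ 2 / 4 - a * (p - 1 / ε * a) = (a - ε * p / 2) ^ 2 / ε := by
    field_simp
    ring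
  have hgap_nonneg : 0 ≤ (a - ε * p / 2) ^ 2 / ε := by positivity
  linarith

lemma mul_sub_add_mul_sub_le {ε M : ℝ} (hε : 0 < ε) (a b p q : ℝ)
    (hpq : √(p ^ 2 + q ^ 2) ≤ M) :
    a * (p - 1 / ε * a) + b * (q - 1 / ε * b) ≤ M ^ 2 / 2 * ε := by
  have hM : p ^ 2 + q ^ 2 ≤ M ^ 2 := (Real.sqrt_le_iff.1 hpq).2
  have hεM : ε * (p ^ 2 + q ^ 2) ≤ ε * M ^ 2 := mul_le_mul_of_nonneg_left hM hε.le
  have hεM_nonneg : 0 ≤ ε * M ^ 2 := mul_nonneg hε.le (sq_nonneg M)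
  linarith [mul_sub_one_div_mul_le hε a p, mul_sub_one_div_mul_le hε b q]

lemma HasDerivAt.sq_mul_sq {x y : ℝ → ℝ} {x' y' t : ℝ} (hx : HasDerivAt x x' t)
    (hy : HasDerivAt y y' t) :
    HasDerivAt (fun s => x s ^ 2 * y s ^ 2)
      (2 * x t * y t ^ 2 * x' + 2 * x t ^ 2 * y t * y') t :=
  ((hx.pow 2).mul (hy.pow 2)).congr_deriv (by simp only [Pi.pow_apply]; ring)

lemma sub_le_mul_sub_of_hasDerivAt_le {g g' : ℝ → ℝ} {a C t₁ t₂ : ℝ}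
    (hg : ∀ t, a ≤ t → HasDerivAt g (g' t) t) (hg' : ∀ t, a ≤ t → g' t ≤ C)
    (ht₁ : a ≤ t₁) (ht : t₁ ≤ t₂) : g t₂ - g t₁ ≤ C * (t₂ - t₁) :=
  (convex_Ici a).image_sub_le_mul_sub_of_deriv_le
    (fun t ht => (hg t ht).continuousAt.continuousWithinAt)
    (fun t ht => (hg t (interior_subset ht)).differentiableAt.differentiableWithinAt)
    (fun t ht => (hg t (interior_subset ht)).deriv ▸ hg' t (interior_subset ht))
    t₁ ht₁ t₂ (ht₁.trans ht) ht

/-- Along a perturbed trajectory, d(X(t₂)) − d(X(t₁)) ≤ (t₂−t₁) M² ε / 2. -/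
theorem d_increase_bound {A : Type*} (f : ℝ × ℝ → A → ℝ × ℝ) (M ε : ℝ)
    (α : ℝ → A) (X₁ X₂ : ℝ → ℝ)
    (hM : ∀ p a, Real.sqrt ((f p a).1 ^ 2 + (f p a).2 ^ 2) ≤ M)
    (hε : 0 < ε)
    (hX₁ : ∀ t, 0 ≤ t →
      HasDerivAt X₁ ((f (X₁ t, X₂ t) (α t)).1 - (1 / ε) * (2 * X₁ t * (X₂ t) ^ 2)) t)
    (hX₂ : ∀ t, 0 ≤ t →
      HasDerivAt X₂ ((f (X₁ t, X₂ t) (α t)).2 - (1 / ε) * (2 * (X₁ t) ^ 2 * X₂ t)) t) :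
    ∀ t₁ t₂ : ℝ, 0 ≤ t₁ → t₁ ≤ t₂ →
      (X₁ t₂) ^ 2 * (X₂ t₂) ^ 2 - (X₁ t₁) ^ 2 * (X₂ t₁) ^ 2
        ≤ (t₂ - t₁) * (M ^ 2 / 2) * ε := by
  intro t₁ t₂ ht₁ ht
  calc _ ≤ M ^ 2 / 2 * ε * (t₂ - t₁) :=
        sub_le_mul_sub_of_hasDerivAt_le (fun t ht => (hX₁ t ht).sq_mul_sq (hX₂ t ht))
          (fun t _ => mul_sub_add_mul_sub_le hε _ _ _ _ (hM _ _)) ht₁ ht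
    _ = _ := by ring
end

section
/- Let d(x) = x₁²x₂² and suppose |f(y,a)| ≤ M for all y ∈ ℝ², a ∈ A. If λ ≥ κ ε^{4/3} with κ = 2^{−4/3} M^{4/3}, then for every x with d(x) = λ (and ∇d(x) ≠ 0) and every a ∈ A, ⟨f(x,a) − (1/ε)∇d(x), ∇d(x)/|∇d(x)|⟩ ≤ 0. In particular the sublevel set Z(λ) = {d ≤ λ} is invariant for the ODE Ẋ = f(X,α) − (1/ε)∇d(X). -/
/-!
With `g = ∇d(x)` and `v = f(x, a)`, the quantity is `‖g‖⁻¹ (⟪v, g⟫ - ‖g‖² / ε) ≤ ‖g‖⁻¹ ‖g‖ (M - ‖g‖ / ε)`,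
so it suffices that `M ε ≤ ‖g‖`. On `{d = λ}` we have `‖g‖² = 4 λ (x₁² + x₂²) ≥ 8 λ^{3/2}` by AM–GM, and
`λ ≥ (M ε / 2)^{4/3}` gives `8 λ^{3/2} ≥ 2 (M ε)²`.
-/

open Real RealInnerProductSpace

theorem EuclideanSpace.norm_toLp_two (a b : ℝ) : ‖!₂[a, b]‖ = √(a ^ 2 + b ^ 2) := by
  simp [EuclideanSpace.norm_eq, Fin.sum_univ_two]

theorem EuclideanSpace.inner_toLp_two (a b c d : ℝ) : ⟪!₂[a, b], !₂[c, d]⟫ = a * c + b * d := by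
  simp [PiLp.inner_apply, Fin.sum_univ_two]
  ring

theorem inner_sub_inv_smul_inv_norm_smul_nonpos {E : Type*} [NormedAddCommGroup E]
    [InnerProductSpace ℝ E] {v g : E} {M ε : ℝ} (hε : 0 < ε) (hv : ‖v‖ ≤ M)
    (hg : M * ε ≤ ‖g‖) : ⟪v - ε⁻¹ • g, ‖g‖⁻¹ • g⟫ ≤ 0 := by
  have hvg : ⟪v, g⟫ ≤ M * ‖g‖ :=
    (real_inner_le_norm v g).trans (mul_le_mul_of_nonneg_right hv (norm_nonneg g))
  have hMg : M ≤ ε⁻¹ * ‖g‖ := by rwa [← le_div_iff₀ hε, div_eq_inv_mul] at hg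
  calc ⟪v - ε⁻¹ • g, ‖g‖⁻¹ • g⟫ = ‖g‖⁻¹ * (⟪v, g⟫ - ε⁻¹ * ‖g‖ * ‖g‖) := by
        rw [inner_smul_right, inner_sub_left, inner_smul_left, real_inner_self_eq_norm_mul_norm]
        simp [mul_assoc]
    _ ≤ ‖g‖⁻¹ * (M * ‖g‖ - ε⁻¹ * ‖g‖ * ‖g‖) := by gcongr
    _ ≤ 0 := mul_nonpos_of_nonneg_of_nonpos (by positivity)
        (by nlinarith [norm_nonneg g])

theorem sq_le_pow_three_of_rpow_le {t p : ℝ} (ht : 0 ≤ t) (hp : 0 ≤ p)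
    (h : t ^ ((4 : ℝ) / 3) ≤ p ^ 2) : t ^ 2 ≤ p ^ 3 := by
  calc t ^ 2 = (t ^ ((4 : ℝ) / 3)) ^ ((3 : ℝ) / 2) := by
        rw [← Real.rpow_mul ht]; norm_num
    _ ≤ (p ^ 2) ^ ((3 : ℝ) / 2) := by gcongr
    _ = p ^ 3 := by
        rw [← Real.rpow_natCast p 2, ← Real.rpow_mul hp]; norm_num

theorem two_rpow_neg_mul_rpow_mul_rpow {M ε : ℝ} (hM : 0 ≤ M) (hε : 0 ≤ ε) (r : ℝ) :
    (2 : ℝ) ^ (-r) * M ^ r * ε ^ r = (M * ε / 2) ^ r := by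
  rw [Real.div_rpow (by positivity) zero_le_two, Real.mul_rpow hM hε, Real.rpow_neg zero_le_two]
  ring

theorem le_sqrt_sq_add_sq_of_rpow_le {c x₁ x₂ : ℝ} (hc : 0 ≤ c)
    (h : (c / 2) ^ ((4 : ℝ) / 3) ≤ x₁ ^ 2 * x₂ ^ 2) :
    c ≤ √((2 * x₁ * x₂ ^ 2) ^ 2 + (2 * x₁ ^ 2 * x₂) ^ 2) := by
  set p := |x₁ * x₂|
  have hp : p ^ 2 = x₁ ^ 2 * x₂ ^ 2 := by rw [sq_abs]; ring
  have hcube : (c / 2) ^ 2 ≤ p ^ 3 :=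
    sq_le_pow_three_of_rpow_le (by positivity) (abs_nonneg _) (hp ▸ h)
  have hamgm : 2 * p ≤ x₁ ^ 2 + x₂ ^ 2 := by
    simpa [p, abs_mul, mul_assoc] using two_mul_le_add_sq |x₁| |x₂|
  rw [Real.le_sqrt hc (by positivity)]
  calc c ^ 2 ≤ 8 * (c / 2) ^ 2 := by nlinarith [sq_nonneg c]
    _ ≤ 4 * p ^ 2 * (2 * p) := by nlinarith
    _ ≤ 4 * p ^ 2 * (x₁ ^ 2 + x₂ ^ 2) := by gcongr
    _ = (2 * x₁ * x₂ ^ 2) ^ 2 + (2 * x₁ ^ 2 * x₂) ^ 2 := by rw [hp]; ring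

theorem level_set_inward_general {A : Type*} (f : ℝ × ℝ → A → ℝ × ℝ) (M ε lam : ℝ)
    (hM : ∀ p a, Real.sqrt ((f p a).1 ^ 2 + (f p a).2 ^ 2) ≤ M)
    (hε : 0 < ε)
    (hlam : (2 : ℝ) ^ (-(4 : ℝ) / 3) * M ^ ((4 : ℝ) / 3) * ε ^ ((4 : ℝ) / 3) ≤ lam)
    (x₁ x₂ : ℝ) (hx : x₁ ^ 2 * x₂ ^ 2 = lam) (a : A) :
    ((f (x₁, x₂) a).1 - (1 / ε) * (2 * x₁ * x₂ ^ 2)) *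
        (2 * x₁ * x₂ ^ 2 / Real.sqrt ((2 * x₁ * x₂ ^ 2) ^ 2 + (2 * x₁ ^ 2 * x₂) ^ 2))
      + ((f (x₁, x₂) a).2 - (1 / ε) * (2 * x₁ ^ 2 * x₂)) *
        (2 * x₁ ^ 2 * x₂ / Real.sqrt ((2 * x₁ * x₂ ^ 2) ^ 2 + (2 * x₁ ^ 2 * x₂) ^ 2))
      ≤ 0 := by
  set v : EuclideanSpace ℝ (Fin 2) := !₂[(f (x₁, x₂) a).1, (f (x₁, x₂) a).2]
  set g : EuclideanSpace ℝ (Fin 2) := !₂[2 * x₁ * x₂ ^ 2, 2 * x₁ ^ 2 * x₂]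
  have hM0 : 0 ≤ M := (Real.sqrt_nonneg _).trans (hM (x₁, x₂) a)
  have hv : ‖v‖ ≤ M := by simpa [v, EuclideanSpace.norm_toLp_two] using hM (x₁, x₂) a
  have hg : M * ε ≤ ‖g‖ := by
    rw [neg_div, two_rpow_neg_mul_rpow_mul_rpow hM0 hε.le, ← hx] at hlam
    simpa [g, EuclideanSpace.norm_toLp_two] using
      le_sqrt_sq_add_sq_of_rpow_le (by positivity) hlam
  convert inner_sub_inv_smul_inv_norm_smul_nonpos hε hv hg using 1
  rw [← WithLp.toLp_smul, ← WithLp.toLp_smul, ← WithLp.toLp_sub]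
  simp only [g, Matrix.smul_cons, Matrix.smul_empty, Matrix.cons_sub_cons,
    Matrix.empty_sub_empty, smul_eq_mul, EuclideanSpace.inner_toLp_two,
    EuclideanSpace.norm_toLp_two]
  ring

/-- On the level set {d = λ} with λ ≥ κ ε^{4/3}, κ = 2^{-4/3} M^{4/3}, the perturbed
    vector field points inward: ⟨F^ε(x,a), ∇d(x)/|∇d(x)|⟩ ≤ 0. -/
theorem level_set_inward {A : Type*} (f : ℝ × ℝ → A → ℝ × ℝ) (M ε lam : ℝ)
    (hM : ∀ p a, Real.sqrt ((f p a).1 ^ 2 + (f p a).2 ^ 2) ≤ M)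
    (hε : 0 < ε)
    (hlam : (2 : ℝ) ^ (-(4 : ℝ) / 3) * M ^ ((4 : ℝ) / 3) * ε ^ ((4 : ℝ) / 3) ≤ lam)
    (x₁ x₂ : ℝ) (hx : x₁ ^ 2 * x₂ ^ 2 = lam)
    (hgrad : (2 * x₁ * x₂ ^ 2, 2 * x₁ ^ 2 * x₂) ≠ ((0 : ℝ), (0 : ℝ))) (a : A) :
    ((f (x₁, x₂) a).1 - (1 / ε) * (2 * x₁ * x₂ ^ 2)) *
        (2 * x₁ * x₂ ^ 2 / Real.sqrt ((2 * x₁ * x₂ ^ 2) ^ 2 + (2 * x₁ ^ 2 * x₂) ^ 2))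
      + ((f (x₁, x₂) a).2 - (1 / ε) * (2 * x₁ ^ 2 * x₂)) *
        (2 * x₁ ^ 2 * x₂ / Real.sqrt ((2 * x₁ * x₂ ^ 2) ^ 2 + (2 * x₁ ^ 2 * x₂) ^ 2))
      ≤ 0 :=
  level_set_inward_general f M ε lam hM hε hlam x₁ x₂ hx a
end

section
/- Let d(x) = x₁²x₂², γ < 1, M ≥ 0, and ε ≤ (4M/7)^{−1/(1−γ)}. Suppose X is an absolutely continuous solution of Ẋ = f(X,α) − (1/ε)∇d(X) with |f| ≤ M, and suppose d(X(t)) > ε^{4γ/3} for all t ∈ [0,τ). Then for a.e. t ∈ [0,τ), −(d/dt)d(X(t)) ≥ ε^{γ−1}·d(X(t))^{3/4}; consequently τ ≤ 4 d(X(0))^{1/4} ε^{1−γ}. -/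
/-!
Along the flow, `d = x₁²x₂²` is pushed down by the penalty term `-(1/ε)|∇d|²` and pushed around
by `f` by at most `M|∇d|`. Since `|∇d|² = 4x₁²x₂²(x₁² + x₂²) ≥ 8 d^{3/2}`, and since
`d^{3/4} > ε^γ` away from the layer, the penalty wins as soon as `M ≤ (7/4) ε^{γ-1}`, leaving
`-ḋ ≥ ε^{γ-1} d^{3/4}`. Then `d^{1/4} + ε^{γ-1} t / 4` is nonincreasing, and positivity of
`d^{1/4}` bounds the time spent away from the layer.
-/

open Set

lemma mul_add_mul_le_sqrt_mul_sqrt_s9 (x y u w : ℝ) :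
    x * u + y * w ≤ √(x ^ 2 + y ^ 2) * √(u ^ 2 + w ^ 2) := by
  rw [← Real.sqrt_mul (by positivity)]
  exact (le_abs_self _).trans (Real.abs_le_sqrt (by nlinarith [sq_nonneg (x * w - y * u)]))

lemma le_rpow_sub_one_of_le_rpow {c ε γ : ℝ} (hc : 0 ≤ c) (hε : 0 < ε) (hγ : γ < 1)
    (h : ε ≤ c ^ (-1 / (1 - γ))) : c ≤ ε ^ (γ - 1) := by
  rcases hc.eq_or_lt with rfl | hc
  · positivity
  rw [neg_div, ← div_neg, neg_sub, one_div] at h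
  exact (Real.le_rpow_inv_iff_of_neg hε hc (by linarith)).1 h

lemma eight_mul_sq_rpow_le_sq_add_sq (a b : ℝ) :
    8 * ((a ^ 2 * b ^ 2) ^ (3 / 4 : ℝ)) ^ 2 ≤ (2 * a * b ^ 2) ^ 2 + (2 * a ^ 2 * b) ^ 2 := by
  have hab : a ^ 2 * b ^ 2 = |a * b| ^ (2 : ℝ) := by
    rw [Real.rpow_two, sq_abs]; ring
  have hP : ((a ^ 2 * b ^ 2) ^ (3 / 4 : ℝ)) ^ 2 = |a * b| ^ 3 := by
    rw [hab, ← Real.rpow_mul (abs_nonneg _), ← Real.rpow_natCast, ← Real.rpow_mul (abs_nonneg _)]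
    norm_num
  have hAM : 2 * |a * b| ≤ a ^ 2 + b ^ 2 := by
    rw [abs_mul]
    nlinarith [sq_abs a, sq_abs b, sq_nonneg (|a| - |b|)]
  calc 8 * ((a ^ 2 * b ^ 2) ^ (3 / 4 : ℝ)) ^ 2 = 4 * |a * b| ^ 2 * (2 * |a * b|) := by
        rw [hP]; ring
    _ ≤ 4 * |a * b| ^ 2 * (a ^ 2 + b ^ 2) := by gcongr
    _ = (2 * a * b ^ 2) ^ 2 + (2 * a ^ 2 * b) ^ 2 := by rw [sq_abs]; ring

lemma mul_le_sq_div_sub_mul {E P N M ε : ℝ} (hε : 0 < ε) (hN : 0 ≤ N) (hP : 0 < P)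
    (hNP : 8 * P ^ 2 ≤ N ^ 2) (hεE : ε * E < P) (hM : M ≤ 7 / 4 * E) :
    E * P ≤ N ^ 2 / ε - N * M := by
  have hE : E ≤ P / ε := by rw [le_div_iff₀ hε]; linarith
  have hPN : 11 / 4 * P ≤ N := by nlinarith
  calc E * P ≤ P / ε * P := by gcongr
    _ ≤ N * (N - 7 / 4 * P) / ε := by
        rw [div_mul_eq_mul_div]
        gcongr <;> linarith
    _ ≤ N * (N / ε - M) := by
        rw [mul_div_assoc]
        gcongr
        rw [sub_div, mul_div_assoc]
        linarith
    _ = N ^ 2 / ε - N * M := by ring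

lemma rpow_mul_le_neg_deriv {a b u w M ε γ : ℝ} (hε : 0 < ε) (hM : M ≤ 7 / 4 * ε ^ (γ - 1))
    (hf : √(u ^ 2 + w ^ 2) ≤ M) (hfar : ε ^ (4 * γ / 3) < a ^ 2 * b ^ 2) :
    ε ^ (γ - 1) * (a ^ 2 * b ^ 2) ^ (3 / 4 : ℝ) ≤
      1 / ε * ((2 * a * b ^ 2) ^ 2 + (2 * a ^ 2 * b) ^ 2) -
        (2 * a * b ^ 2 * u + 2 * a ^ 2 * b * w) := by
  set N := √((2 * a * b ^ 2) ^ 2 + (2 * a ^ 2 * b) ^ 2)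
  have hN : N ^ 2 = (2 * a * b ^ 2) ^ 2 + (2 * a ^ 2 * b) ^ 2 := Real.sq_sqrt (by positivity)
  have hd : 0 < a ^ 2 * b ^ 2 := (Real.rpow_pos_of_pos hε _).trans hfar
  have hεE : ε * ε ^ (γ - 1) < (a ^ 2 * b ^ 2) ^ (3 / 4 : ℝ) := by
    have := Real.rpow_lt_rpow (by positivity) hfar (by norm_num : (0 : ℝ) < 3 / 4)
    rwa [← Real.rpow_mul hε.le, show 4 * γ / 3 * (3 / 4) = 1 + (γ - 1) by ring,
      Real.rpow_add hε, Real.rpow_one] at this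
  have hdrift : 2 * a * b ^ 2 * u + 2 * a ^ 2 * b * w ≤ N * M :=
    (mul_add_mul_le_sqrt_mul_sqrt_s9 _ _ _ _).trans (by gcongr)
  have hNP : 8 * ((a ^ 2 * b ^ 2) ^ (3 / 4 : ℝ)) ^ 2 ≤ N ^ 2 :=
    hN ▸ eight_mul_sq_rpow_le_sq_add_sq a b
  calc ε ^ (γ - 1) * (a ^ 2 * b ^ 2) ^ (3 / 4 : ℝ) ≤ N ^ 2 / ε - N * M :=
        mul_le_sq_div_sub_mul hε (Real.sqrt_nonneg _) (Real.rpow_pos_of_pos hd _) hNP hεE hM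
    _ ≤ N ^ 2 / ε - (2 * a * b ^ 2 * u + 2 * a ^ 2 * b * w) := by gcongr
    _ = _ := by rw [hN, one_div_mul_eq_div]

lemma antitoneOn_rpow_add_mul_of_le_neg_deriv {g : ℝ → ℝ} {s : Set ℝ} {c p : ℝ}
    (hs : Convex ℝ s) (hp : 0 ≤ p) (hpos : ∀ t ∈ s, 0 < g t)
    (hdiff : ∀ t ∈ s, DifferentiableAt ℝ g t) (hrate : ∀ t ∈ s, c * g t ^ (1 - p) ≤ -deriv g t) :
    AntitoneOn (fun t => g t ^ p + c * p * t) s := by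
  have hderiv : ∀ t ∈ s, HasDerivAt (fun t => g t ^ p + c * p * t)
      (deriv g t * p * g t ^ (p - 1) + c * p) t := fun t ht => by
    have := ((hdiff t ht).hasDerivAt.rpow_const (p := p) (Or.inl (hpos t ht).ne')).add
      ((hasDerivAt_id' t).const_mul (c * p))
    rwa [mul_one] at this
  refine antitoneOn_of_deriv_nonpos hs
    (fun t ht => (hderiv t ht).continuousAt.continuousWithinAt)
    (fun t ht => (hderiv t (interior_subset ht)).differentiableAt.differentiableWithinAt)
    (fun t ht => ?_)
  have ht := interior_subset ht
  have hcancel : g t ^ (1 - p) * g t ^ (p - 1) = 1 := by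
    rw [← Real.rpow_add (hpos t ht)]; norm_num
  have := mul_le_mul_of_nonneg_right (le_neg.1 (hrate t ht))
    (mul_nonneg hp (Real.rpow_nonneg (hpos t ht).le (p - 1)))
  rw [(hderiv t ht).deriv]
  linear_combination this - c * p * hcancel

lemma le_rpow_div_of_le_neg_deriv {g : ℝ → ℝ} {c p τ : ℝ} (hc : 0 < c) (hp : 0 < p)
    (hg0 : 0 ≤ g 0) (hpos : ∀ t ∈ Ico 0 τ, 0 < g t)
    (hdiff : ∀ t ∈ Ico 0 τ, DifferentiableAt ℝ g t)
    (hrate : ∀ t ∈ Ico 0 τ, c * g t ^ (1 - p) ≤ -deriv g t) :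
    τ ≤ g 0 ^ p / (c * p) := by
  by_contra! hτ
  have hT : g 0 ^ p / (c * p) ∈ Ico 0 τ := ⟨by positivity, hτ⟩
  have hanti := antitoneOn_rpow_add_mul_of_le_neg_deriv (convex_Ico 0 τ) hp.le hpos hdiff hrate
    ⟨le_rfl, hT.1.trans_lt hτ⟩ hT hT.1
  have := Real.rpow_pos_of_pos (hpos _ hT) p
  simp only [mul_zero, add_zero, mul_div_cancel₀ _ (by positivity : c * p ≠ 0)] at hanti
  linarith

/-- While d(X) stays above ε^{4γ/3}, d(X) decreases at rate at least ε^{γ-1} d(X)^{3/4},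
    and the trajectory reaches the layer before time 4 d(X(0))^{1/4} ε^{1-γ}. -/
theorem decay_rate_and_entry_time {A : Type*} (f : ℝ × ℝ → A → ℝ × ℝ) (M ε γ τ : ℝ)
    (α : ℝ → A) (X₁ X₂ : ℝ → ℝ)
    (hγ : γ < 1) (hM : 0 ≤ M)
    (hMf : ∀ p a, Real.sqrt ((f p a).1 ^ 2 + (f p a).2 ^ 2) ≤ M)
    (hε : 0 < ε) (hεsmall : ε ≤ (4 * M / 7) ^ (-(1 : ℝ) / (1 - γ)))
    (hX₁ : ∀ t ∈ Set.Ico (0 : ℝ) τ,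
      HasDerivAt X₁ ((f (X₁ t, X₂ t) (α t)).1 - (1 / ε) * (2 * X₁ t * (X₂ t) ^ 2)) t)
    (hX₂ : ∀ t ∈ Set.Ico (0 : ℝ) τ,
      HasDerivAt X₂ ((f (X₁ t, X₂ t) (α t)).2 - (1 / ε) * (2 * (X₁ t) ^ 2 * X₂ t)) t)
    (hfar : ∀ t ∈ Set.Ico (0 : ℝ) τ, ε ^ ((4 : ℝ) * γ / 3) < (X₁ t) ^ 2 * (X₂ t) ^ 2) :
    (∀ t ∈ Set.Ico (0 : ℝ) τ, ∀ D : ℝ,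
        HasDerivAt (fun s => (X₁ s) ^ 2 * (X₂ s) ^ 2) D t →
        ε ^ (γ - 1) * ((X₁ t) ^ 2 * (X₂ t) ^ 2) ^ ((3 : ℝ) / 4) ≤ -D) ∧
    τ ≤ 4 * ((X₁ 0) ^ 2 * (X₂ 0) ^ 2) ^ ((1 : ℝ) / 4) * ε ^ (1 - γ) := by
  have hME : M ≤ 7 / 4 * ε ^ (γ - 1) := by
    have := le_rpow_sub_one_of_le_rpow (by positivity) hε hγ hεsmall
    linarith
  have hderiv (t) (ht : t ∈ Ico 0 τ) : HasDerivAt (fun s => X₁ s ^ 2 * X₂ s ^ 2) _ t :=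
    ((hX₁ t ht).pow 2).mul ((hX₂ t ht).pow 2)
  have hrate : ∀ t ∈ Ico 0 τ, ∀ D, HasDerivAt (fun s => X₁ s ^ 2 * X₂ s ^ 2) D t →
      ε ^ (γ - 1) * (X₁ t ^ 2 * X₂ t ^ 2) ^ (3 / 4 : ℝ) ≤ -D := fun t ht D hD => by
    rw [hD.unique (hderiv t ht)]
    exact (rpow_mul_le_neg_deriv hε hME (hMf _ _) (hfar t ht)).trans_eq (by norm_num; ring)
  refine ⟨hrate, ?_⟩
  have hτ := le_rpow_div_of_le_neg_deriv (g := fun s => X₁ s ^ 2 * X₂ s ^ 2)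
    (Real.rpow_pos_of_pos hε (γ - 1)) (by norm_num : (0 : ℝ) < 1 / 4) (by positivity)
    (fun t ht => (Real.rpow_pos_of_pos hε _).trans (hfar t ht))
    (fun t ht => (hderiv t ht).differentiableAt)
    (fun t ht => by norm_num [hrate t ht _ (hderiv t ht).differentiableAt.hasDerivAt])
  refine hτ.trans_eq ?_
  rw [show 1 - γ = -(γ - 1) by ring, Real.rpow_neg hε.le]
  field_simp
end

section
/- (Łojasiewicz implies finite length and convergence of gradient descent) Let d : ℝ² → [0,∞) be C¹ with locally Lipschitz gradient, and suppose there exist ν > 0 and θ ∈ (0,1) such that |∇d(x)| ≥ ν d(x)^θ for all x. Let Z solve Ż = −∇d(Z), Z(0) = x, on [0,T). Then for all 0 ≤ t₁ ≤ t₂ < T, |Z(t₂) − Z(t₁)| ≤ ∫_{t₁}^{t₂}|Ż| ≤ (1/(ν(1−θ)))(d(Z(t₁))^{1−θ} − d(Z(t₂))^{1−θ}). Consequently Z is bounded (|Z(t)| ≤ |x| + d(x)^{1−θ}/(ν(1−θ))), the solution is global, and Z(t) converges to a limit x̄ with d(x̄) = 0 as t → ∞. -/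
/-!
Along the flow, `h = d ∘ Z` satisfies `h' = -‖∇d(Z)‖²`, so by the Łojasiewicz inequality
`(h ^ (1 - θ))' = -(1 - θ) h ^ (-θ) ‖∇d(Z)‖² ≤ -ν (1 - θ) ‖Ż‖`. Comparing `‖Z t - Z t₁‖` with this
Lyapunov function gives the finite-length bound, which makes `Z` Cauchy at infinity. Once `h`
vanishes it stays zero, so `h ^ (1 - θ)` still has a right derivative there. The limit is a zero
of `d`, since `h ≥ M > 0` would force `h' ≤ -(ν M ^ θ)²` and drive `h` below zero.
-/

open scoped Topology

open Set Filter

theorem antitoneOn_Ici_of_hasDerivAt_nonpos {f f' : ℝ → ℝ} {a : ℝ}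
    (hf : ∀ t, a ≤ t → HasDerivAt f (f' t) t) (hf' : ∀ t, a ≤ t → f' t ≤ 0) :
    AntitoneOn f (Ici a) := by
  refine antitoneOn_of_hasDerivWithinAt_nonpos (f' := f') (convex_Ici a)
    (fun t ht => (hf t ht).continuousAt.continuousWithinAt) (fun t ht => ?_) (fun t ht => ?_)
  all_goals rw [interior_Ici] at ht
  exacts [(hf t ht.le).hasDerivWithinAt, hf' t ht.le]

theorem hasDerivWithinAt_rpow_Ici_of_antitoneOn {f : ℝ → ℝ} {f' p t : ℝ} (hf : HasDerivAt f f' t)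
    (hf₀ : ∀ s, 0 ≤ f s) (hanti : AntitoneOn f (Ici t)) (hp : 0 < p) :
    HasDerivWithinAt (fun s => f s ^ p) (f' * p * f t ^ (p - 1)) (Ici t) t := by
  rcases (hf₀ t).eq_or_lt with hft | hft
  · have hf'0 : f' = 0 :=
      IsLocalMin.hasDerivAt_eq_zero (Eventually.of_forall fun s => hft ▸ hf₀ s) hf
    have hvanish : ∀ s ∈ Ici t, f s ^ p = 0 := fun s hs => by
      rw [le_antisymm (hft ▸ hanti self_mem_Ici hs hs) (hf₀ s), Real.zero_rpow hp.ne']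
    simpa [hf'0] using (hasDerivWithinAt_const t (Ici t) (0 : ℝ)).congr_of_mem hvanish self_mem_Ici
  · exact (hf.rpow_const (Or.inl hft.ne')).hasDerivWithinAt

theorem exists_tendsto_of_dist_le_sub {X : Type*} [PseudoMetricSpace X] [CompleteSpace X]
    {Z : ℝ → X} {g : ℝ → ℝ} (hg : ∀ t, 0 ≤ g t)
    (hZ : ∀ t₁ t₂, 0 ≤ t₁ → t₁ ≤ t₂ → dist (Z t₁) (Z t₂) ≤ g t₁ - g t₂) :
    ∃ x, Tendsto Z atTop (𝓝 x) := by
  let g₀ : Ici (0 : ℝ) → ℝ := fun t => g t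
  have hanti : Antitone g₀ := fun t₁ t₂ h => by
    linarith [dist_nonneg.trans (hZ t₁ t₂ t₁.2 h)]
  have hbdd : BddBelow (range g₀) := ⟨0, forall_mem_range.2 fun t => hg t⟩
  have hlim := tendsto_atTop_ciInf hanti hbdd
  have hcauchy : CauchySeq fun t : Ici (0 : ℝ) => Z t := by
    refine cauchySeq_of_le_tendsto_0' (fun t => g₀ t - ⨅ s, g₀ s) (fun t₁ t₂ h => ?_)
      (by simpa using hlim.sub_const (⨅ s, g₀ s))
    linarith [hZ t₁ t₂ t₁.2 h, ciInf_le hbdd t₂]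
  obtain ⟨x, hx⟩ := cauchySeq_tendsto_of_complete hcauchy
  exact ⟨x, tendsto_comp_val_Ici_atTop.1 hx⟩

section GradientFlow

variable {E : Type*} [NormedAddCommGroup E] [InnerProductSpace ℝ E] [CompleteSpace E]
  {d : E → ℝ} {Z : ℝ → E} {ν θ : ℝ}

theorem gradient_eq_zero_of_isMinOn {y : E} (hy : IsMinOn d univ y) : gradient d y = 0 := by
  simp [gradient, (hy.isLocalMin univ_mem).fderiv_eq_zero]

theorem HasDerivAt.comp_neg_gradient_flow {t : ℝ} (hd : DifferentiableAt ℝ d (Z t))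
    (hZ : HasDerivAt Z (-gradient d (Z t)) t) :
    HasDerivAt (fun s => d (Z s)) (-‖gradient d (Z t)‖ ^ 2) t := by
  have := (hasGradientAt_iff_hasFDerivAt.1 hd.hasGradientAt).comp_hasDerivAt t hZ
  rwa [InnerProductSpace.toDual_apply_apply, inner_neg_right, real_inner_self_eq_norm_sq] at this

theorem antitoneOn_comp_neg_gradient_flow (hd : Differentiable ℝ d)
    (hZ : ∀ t, 0 ≤ t → HasDerivAt Z (-gradient d (Z t)) t) :
    AntitoneOn (fun t => d (Z t)) (Ici 0) :=
  antitoneOn_Ici_of_hasDerivAt_nonpos (fun t ht => (hZ t ht).comp_neg_gradient_flow (hd _))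
    fun _ _ => neg_nonpos.2 (sq_nonneg _)

theorem norm_sub_le_of_lojasiewicz (hd₀ : ∀ x, 0 ≤ d x) (hd : Differentiable ℝ d)
    (hν : 0 < ν) (hθ : θ < 1) (hloj : ∀ x, ν * d x ^ θ ≤ ‖gradient d x‖)
    (hZ : ∀ t, 0 ≤ t → HasDerivAt Z (-gradient d (Z t)) t) {t₁ t₂ : ℝ} (ht₁ : 0 ≤ t₁)
    (ht₁₂ : t₁ ≤ t₂) :
    ‖Z t₂ - Z t₁‖ ≤ 1 / (ν * (1 - θ)) * (d (Z t₁) ^ (1 - θ) - d (Z t₂) ^ (1 - θ)) := by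
  have hp : 0 < 1 - θ := sub_pos.2 hθ
  have hanti := antitoneOn_comp_neg_gradient_flow hd hZ
  have hnonneg : ∀ t ∈ Icc t₁ t₂, 0 ≤ t := fun t ht => ht₁.trans ht.1
  have hpow : ∀ t ∈ Ico t₁ t₂, HasDerivWithinAt (fun s => d (Z s) ^ (1 - θ))
      (-‖gradient d (Z t)‖ ^ 2 * (1 - θ) * d (Z t) ^ (-θ)) (Ici t) t := fun t ht => by
    have ht0 := hnonneg t (Ico_subset_Icc_self ht)
    simpa using hasDerivWithinAt_rpow_Ici_of_antitoneOn
      ((hZ t ht0).comp_neg_gradient_flow (hd _)) (fun s => hd₀ (Z s))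
      (hanti.mono (Ici_subset_Ici.2 ht0)) hp
  -- At a zero of `d` the gradient vanishes, so the bound holds despite `0 ^ (-θ) = 0`.
  have hbound : ∀ y, ‖gradient d y‖ ≤ ‖gradient d y‖ ^ 2 * d y ^ (-θ) / ν := fun y => by
    rcases (hd₀ y).eq_or_lt with hy | hy
    · simp [gradient_eq_zero_of_isMinOn (fun z _ => hy ▸ hd₀ z : IsMinOn d univ y)]
    · rw [Real.rpow_neg hy.le, le_div_iff₀ hν, ← div_eq_mul_inv,
        le_div_iff₀ (Real.rpow_pos_of_pos hy θ), sq, mul_assoc]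
      exact mul_le_mul_of_nonneg_left (by linarith [hloj y]) (norm_nonneg _)
  have hdZc : ContinuousOn (fun t => d (Z t)) (Icc t₁ t₂) := fun t ht =>
    (hd.continuous.continuousAt.comp (hZ t (hnonneg t ht)).continuousAt).continuousWithinAt
  refine image_norm_le_of_norm_deriv_right_le_deriv_boundary' (f := fun t => Z t - Z t₁)
    (B := fun t => 1 / (ν * (1 - θ)) * (d (Z t₁) ^ (1 - θ) - d (Z t) ^ (1 - θ)))
    (fun t ht => ((hZ t (hnonneg t ht)).sub_const (Z t₁)).continuousAt.continuousWithinAt)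
    (fun t ht => ((hZ t (hnonneg t (Ico_subset_Icc_self ht))).sub_const (Z t₁)).hasDerivWithinAt)
    (by simp) ?_ (fun t ht => ((hpow t ht).const_sub _).const_mul _) (fun t _ => ?_)
    ⟨ht₁₂, le_rfl⟩
  · exact continuousOn_const.mul (continuousOn_const.sub (hdZc.rpow_const fun _ _ => Or.inr hp.le))
  · convert hbound (Z t) using 1
    · simp
    · field_simp

theorem nonpos_of_forall_le_comp_neg_gradient_flow (hd₀ : ∀ x, 0 ≤ d x)
    (hd : Differentiable ℝ d) (hν : 0 < ν) (hθ : 0 ≤ θ) (hloj : ∀ x, ν * d x ^ θ ≤ ‖gradient d x‖)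
    (hZ : ∀ t, 0 ≤ t → HasDerivAt Z (-gradient d (Z t)) t) {M : ℝ}
    (hM : ∀ t, 0 ≤ t → M ≤ d (Z t)) : M ≤ 0 := by
  by_contra! hM₀
  set c := (ν * M ^ θ) ^ 2
  have hc : 0 < c := by positivity
  have hanti : AntitoneOn (fun t => d (Z t) + c * t) (Ici 0) := by
    refine antitoneOn_Ici_of_hasDerivAt_nonpos (fun t ht =>
      ((hZ t ht).comp_neg_gradient_flow (hd _)).add ((hasDerivAt_id t).const_mul c)) fun t ht => ?_
    have hgrad : ν * M ^ θ ≤ ‖gradient d (Z t)‖ :=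
      (mul_le_mul_of_nonneg_left (Real.rpow_le_rpow hM₀.le (hM t ht) hθ) hν.le).trans (hloj _)
    have := pow_le_pow_left₀ (by positivity) hgrad 2
    linarith
  have hT : 0 ≤ d (Z 0) / c + 1 := by have := hd₀ (Z 0); positivity
  have : d (Z (d (Z 0) / c + 1)) + c * (d (Z 0) / c + 1) ≤ d (Z 0) + c * 0 :=
    hanti self_mem_Ici hT hT
  rw [mul_add, mul_div_cancel₀ _ hc.ne'] at this
  linarith [hd₀ (Z (d (Z 0) / c + 1))]

theorem exists_tendsto_zero_of_lojasiewicz (hd₀ : ∀ x, 0 ≤ d x) (hd : Differentiable ℝ d)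
    (hν : 0 < ν) (hθ : θ ∈ Ioo 0 1) (hloj : ∀ x, ν * d x ^ θ ≤ ‖gradient d x‖)
    (hZ : ∀ t, 0 ≤ t → HasDerivAt Z (-gradient d (Z t)) t) :
    ∃ xbar, d xbar = 0 ∧ Tendsto Z atTop (𝓝 xbar) := by
  have hC : 0 < ν * (1 - θ) := mul_pos hν (sub_pos.2 hθ.2)
  obtain ⟨xbar, hxbar⟩ := exists_tendsto_of_dist_le_sub (Z := Z)
    (g := fun t => 1 / (ν * (1 - θ)) * d (Z t) ^ (1 - θ))
    (fun t => by have := hd₀ (Z t); positivity) fun t₁ t₂ ht₁ ht => by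
      rw [dist_comm, dist_eq_norm, ← mul_sub]
      exact norm_sub_le_of_lojasiewicz hd₀ hd hν hθ.2 hloj hZ ht₁ ht
  refine ⟨xbar, le_antisymm ?_ (hd₀ xbar), hxbar⟩
  refine nonpos_of_forall_le_comp_neg_gradient_flow hd₀ hd hν hθ.1.le hloj hZ fun t ht =>
    le_of_tendsto ((hd.continuous.tendsto xbar).comp hxbar) ?_
  filter_upwards [eventually_ge_atTop t] with s hs
  exact antitoneOn_comp_neg_gradient_flow hd hZ ht (ht.trans hs) hs

end GradientFlow

theorem lojasiewicz_gradient_descent_general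
    (d : EuclideanSpace ℝ (Fin 2) → ℝ) (ν θ : ℝ)
    (hd0 : ∀ x, 0 ≤ d x) (hd : ContDiff ℝ 1 d)
    (hν : 0 < ν) (hθ : θ ∈ Set.Ioo (0 : ℝ) 1)
    (hloj : ∀ x, ν * (d x) ^ θ ≤ ‖gradient d x‖)
    (x : EuclideanSpace ℝ (Fin 2)) (Z : ℝ → EuclideanSpace ℝ (Fin 2))
    (hZ : ∀ t, 0 ≤ t → HasDerivAt Z (-(gradient d (Z t))) t)
    (hZ0 : Z 0 = x) :
    (∀ t₁ t₂ : ℝ, 0 ≤ t₁ → t₁ ≤ t₂ →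
        ‖Z t₂ - Z t₁‖ ≤ (1 / (ν * (1 - θ))) * ((d (Z t₁)) ^ (1 - θ) - (d (Z t₂)) ^ (1 - θ))) ∧
    (∀ t, 0 ≤ t → ‖Z t‖ ≤ ‖x‖ + (d x) ^ (1 - θ) / (ν * (1 - θ))) ∧
    (∃ xbar : EuclideanSpace ℝ (Fin 2),
        d xbar = 0 ∧ Filter.Tendsto Z Filter.atTop (𝓝 xbar)) := by
  have hdiff : Differentiable ℝ d := hd.differentiable one_ne_zero
  have hlen t₁ t₂ (ht₁ : 0 ≤ t₁) (ht : t₁ ≤ t₂) :=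
    norm_sub_le_of_lojasiewicz hd0 hdiff hν hθ.2 hloj hZ ht₁ ht
  refine ⟨hlen, fun t ht => ?_, exists_tendsto_zero_of_lojasiewicz hd0 hdiff hν hθ hloj hZ⟩
  have h0t := hlen 0 t le_rfl ht
  rw [hZ0] at h0t
  have hC : 0 < ν * (1 - θ) := mul_pos hν (sub_pos.2 hθ.2)
  have := Real.rpow_nonneg (hd0 (Z t)) (1 - θ)
  calc ‖Z t‖ ≤ ‖x‖ + ‖Z t - x‖ := norm_le_norm_add_norm_sub' (Z t) x
    _ ≤ ‖x‖ + d x ^ (1 - θ) / (ν * (1 - θ)) := by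
      grw [h0t, one_div_mul_eq_div]
      gcongr
      linarith

/-- Łojasiewicz inequality implies the finite-length estimate, boundedness and
    convergence of the gradient descent to a zero of d. -/
theorem lojasiewicz_gradient_descent
    (d : EuclideanSpace ℝ (Fin 2) → ℝ) (ν θ : ℝ)
    (hd0 : ∀ x, 0 ≤ d x) (hd : ContDiff ℝ 1 d)
    (hlip : LocallyLipschitz (gradient d))
    (hν : 0 < ν) (hθ : θ ∈ Set.Ioo (0 : ℝ) 1)
    (hloj : ∀ x, ν * (d x) ^ θ ≤ ‖gradient d x‖)
    (x : EuclideanSpace ℝ (Fin 2)) (Z : ℝ → EuclideanSpace ℝ (Fin 2))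
    (hZ : ∀ t, 0 ≤ t → HasDerivAt Z (-(gradient d (Z t))) t)
    (hZ0 : Z 0 = x) :
    (∀ t₁ t₂ : ℝ, 0 ≤ t₁ → t₁ ≤ t₂ →
        ‖Z t₂ - Z t₁‖ ≤ (1 / (ν * (1 - θ))) * ((d (Z t₁)) ^ (1 - θ) - (d (Z t₂)) ^ (1 - θ))) ∧
    (∀ t, 0 ≤ t → ‖Z t‖ ≤ ‖x‖ + (d x) ^ (1 - θ) / (ν * (1 - θ))) ∧
    (∃ xbar : EuclideanSpace ℝ (Fin 2),
        d xbar = 0 ∧ Filter.Tendsto Z Filter.atTop (𝓝 xbar)) :=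
  lojasiewicz_gradient_descent_general d ν θ hd0 hd hν hθ hloj x Z hZ hZ0
end

section
/- (Trajectory from the origin with non-bisector constant control enters the dominant branch) Let d(x) = x₁²x₂² and θ with cos θ > sin θ > 0. For ε > 0, let X^ε solve Ẋ = (cos θ, sin θ) − (1/ε)∇d(X) with X^ε(0) = (0,0). Then for all t ≥ 0: X₁^ε(t) ≥ 0, X₂^ε(t) ≥ 0, and X₁^ε(t) − X₂^ε(t) ≥ (cos θ − sin θ)·t. -/
/-!
Each of `X₁`, `X₂` and `X₁ - X₂` has a strictly positive derivative wherever it vanishes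
(`cos θ`, `sin θ` and `cos θ - sin θ` respectively), so each stays nonnegative. Then
`(X₁ - X₂)' = cos θ - sin θ + (2 / ε) X₁ X₂ (X₁ - X₂) ≥ cos θ - sin θ`, and comparison with
`(cos θ - sin θ) t` gives the linear separation.
-/

lemma nonneg_of_hasDerivAt_pos_of_eq_zero {f f' : ℝ → ℝ} {a : ℝ}
    (hf : ∀ t, a ≤ t → HasDerivAt f (f' t) t) (ha : 0 ≤ f a)
    (hpos : ∀ t, a ≤ t → f t = 0 → 0 < f' t) :
    ∀ t, a ≤ t → 0 ≤ f t := fun _ hb =>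
  image_le_of_deriv_right_lt_deriv_boundary' (f := fun _ => 0) (f' := fun _ => 0)
    continuousOn_const (fun _ _ => hasDerivWithinAt_const _ _ _) ha
    (fun t ht => (hf t ht.1).continuousAt.continuousWithinAt)
    (fun t ht => (hf t ht.1).hasDerivWithinAt) (fun t ht h => hpos t ht.1 h.symm) ⟨hb, le_rfl⟩

lemma le_of_hasDerivAt_le {f f' g g' : ℝ → ℝ} {a : ℝ}
    (hf : ∀ t, a ≤ t → HasDerivAt f (f' t) t) (hg : ∀ t, a ≤ t → HasDerivAt g (g' t) t)
    (ha : f a ≤ g a) (hle : ∀ t, a ≤ t → f' t ≤ g' t) :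
    ∀ t, a ≤ t → f t ≤ g t := fun _ hb =>
  image_le_of_deriv_right_le_deriv_boundary
    (fun t ht => (hf t ht.1).continuousAt.continuousWithinAt)
    (fun t ht => (hf t ht.1).hasDerivWithinAt) ha
    (fun t ht => (hg t ht.1).continuousAt.continuousWithinAt)
    (fun t ht => (hg t ht.1).hasDerivWithinAt) (fun t ht => hle t ht.1) ⟨hb, le_rfl⟩

/-- Trajectory from the origin with constant non-bisector control: componentwise
    nonnegativity and linear separation X₁ − X₂ ≥ (cos θ − sin θ) t. -/
theorem origin_nonbisector_branch (θ ε : ℝ)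
    (hθ : Real.sin θ < Real.cos θ) (hθ' : 0 < Real.sin θ) (hε : 0 < ε)
    (X₁ X₂ : ℝ → ℝ)
    (hX₁ : ∀ t, 0 ≤ t →
      HasDerivAt X₁ (Real.cos θ - (1 / ε) * (2 * X₁ t * (X₂ t) ^ 2)) t)
    (hX₂ : ∀ t, 0 ≤ t →
      HasDerivAt X₂ (Real.sin θ - (1 / ε) * (2 * (X₁ t) ^ 2 * X₂ t)) t)
    (h0 : X₁ 0 = 0 ∧ X₂ 0 = 0) :
    ∀ t, 0 ≤ t →
      0 ≤ X₁ t ∧ 0 ≤ X₂ t ∧ (Real.cos θ - Real.sin θ) * t ≤ X₁ t - X₂ t := by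
  have hc : 0 < Real.cos θ - Real.sin θ := sub_pos.mpr hθ
  have hX₁_nonneg := nonneg_of_hasDerivAt_pos_of_eq_zero hX₁ h0.1.ge fun t _ h => by
    simp only [h]; linarith
  have hX₂_nonneg := nonneg_of_hasDerivAt_pos_of_eq_zero hX₂ h0.2.ge fun t _ h => by
    simp only [h]; linarith
  have hz : ∀ t, 0 ≤ t → HasDerivAt (fun s => X₁ s - X₂ s)
      (Real.cos θ - Real.sin θ + 2 / ε * (X₁ t * X₂ t) * (X₁ t - X₂ t)) t := fun t ht =>
    ((hX₁ t ht).sub (hX₂ t ht)).congr_deriv (by ring)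
  have hz_nonneg := nonneg_of_hasDerivAt_pos_of_eq_zero hz (by simp [h0]) fun t _ h => by
    simpa [h] using hc
  have hlin : ∀ t, 0 ≤ t → HasDerivAt (fun s => (Real.cos θ - Real.sin θ) * s)
      (Real.cos θ - Real.sin θ) t := fun t _ => by
    simpa using (hasDerivAt_id t).const_mul (Real.cos θ - Real.sin θ)
  have hsep := le_of_hasDerivAt_le hlin hz (by simp [h0]) fun t ht =>
    le_add_of_nonneg_right <| mul_nonneg
      (mul_nonneg (by positivity) (mul_nonneg (hX₁_nonneg t ht) (hX₂_nonneg t ht)))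
      (hz_nonneg t ht)
  exact fun t ht => ⟨hX₁_nonneg t ht, hX₂_nonneg t ht, hsep t ht⟩
end
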